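/- Special case of Goursat's lemma for two profinite groups: Let B₁ and B₂ be profinite groups having no finite simple group as a common continuous quotient. If H is a closed subgroup of B₁ × B₂ projecting surjectively onto each factor, then H = B₁ × B₂. -/

import Mathlib

/-!
A proper closed subgroup `H` of the profinite group `B₁ × B₂` lies in a proper open subgroup,
which contains a box `U₁ × U₂` of open normal subgroups. Hence the image of `H` in the finite
group `B₁ ⧸ U₁ × B₂ ⧸ U₂` is still proper with surjective projections. By Goursat's lemma it
is the graph of an isomorphism between nontrivial quotients of `B₁ ⧸ U₁` and `B₂ ⧸ U₂`, and a
simple quotient of this finite group is a common continuous simple quotient of `B₁` and `B₂`.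
-/

open Function

universe u

theorem exists_surjective_isSimpleGroup {G : Type u} [Group G] [Finite G] [Nontrivial G] :
    ∃ (Q : Type u) (_ : Group Q), Finite Q ∧ IsSimpleGroup Q ∧ ∃ f : G →* Q, Surjective f := by
  obtain ⟨N, ⟨hN, hNtop⟩, hmax⟩ := Set.Finite.exists_maximal
    (Set.toFinite {N : Subgroup G | N.Normal ∧ N ≠ ⊤}) ⟨⊥, inferInstance, bot_ne_top⟩
  have hsurj := QuotientGroup.mk'_surjective N
  have : Nontrivial (G ⧸ N) := QuotientGroup.nontrivial_iff.2 hNtop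
  refine ⟨G ⧸ N, inferInstance, inferInstance, ⟨fun K hK => ?_⟩, _, hsurj⟩
  have hNK : N ≤ K.comap (QuotientGroup.mk' N) := by
    simpa using (QuotientGroup.mk' N).ker_le_comap K
  by_cases htop : K.comap (QuotientGroup.mk' N) = ⊤
  · exact .inr <| Subgroup.comap_injective hsurj <| by rw [htop, Subgroup.comap_top]
  · refine .inl <| Subgroup.comap_injective hsurj ?_
    rw [MonoidHom.comap_bot, QuotientGroup.ker_mk']
    exact (hmax ⟨hK.comap _, htop⟩ hNK).antisymm hNK

namespace Subgroup

variable {G G' G₁ G₂ G₁' G₂' : Type*} [Group G] [Group G'] [Group G₁] [Group G₂] [Group G₁']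
  [Group G₂']

theorem goursatFst_ne_top {I : Subgroup (G₁ × G₂)} (hI₂ : Surjective (Prod.snd ∘ I.subtype))
    (hI : I ≠ ⊤) : I.goursatFst ≠ ⊤ := by
  refine fun h => hI <| (eq_top_iff' I).2 fun ⟨a, b⟩ => ?_
  obtain ⟨⟨k, hk⟩, rfl⟩ := hI₂ b
  have : (a * k.1⁻¹, 1) ∈ I := mem_goursatFst.1 (h ▸ mem_top _)
  convert mul_mem this hk using 1
  ext <;> simp

theorem exists_common_simple_quotient_of_ne_top {G₁ G₂ : Type u} [Group G₁] [Group G₂]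
    [Finite G₁] {I : Subgroup (G₁ × G₂)} (hI₁ : Surjective (Prod.fst ∘ I.subtype))
    (hI₂ : Surjective (Prod.snd ∘ I.subtype)) (hI : I ≠ ⊤) :
    ∃ (Q : Type u) (_ : Group Q), Finite Q ∧ IsSimpleGroup Q ∧
      (∃ f : G₁ →* Q, Surjective f) ∧ ∃ g : G₂ →* Q, Surjective g := by
  have := normal_goursatFst hI₁
  have := normal_goursatSnd hI₂
  obtain ⟨e, -⟩ := goursat_surjective hI₁ hI₂
  have : Nontrivial (G₁ ⧸ I.goursatFst) :=
    QuotientGroup.nontrivial_iff.2 (goursatFst_ne_top hI₂ hI)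
  obtain ⟨Q, _, hQ, hsimple, f, hf⟩ := exists_surjective_isSimpleGroup (G := G₁ ⧸ I.goursatFst)
  exact ⟨Q, _, hQ, hsimple,
    ⟨f.comp (QuotientGroup.mk' _), hf.comp (QuotientGroup.mk'_surjective _)⟩,
    f.comp (e.symm.toMonoidHom.comp (QuotientGroup.mk' _)),
    hf.comp (e.symm.surjective.comp (QuotientGroup.mk'_surjective _))⟩

theorem map_ne_top_of_le_of_ker_le {f : G →* G'} {H N : Subgroup G} (hH : H ≤ N)
    (hf : f.ker ≤ N) (hN : N ≠ ⊤) : H.map f ≠ ⊤ := by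
  refine fun h => hN <| top_le_iff.1 ?_
  rw [← comap_top f, ← h, comap_map_eq]
  exact sup_le hH hf

theorem surjective_fst_map_prodMap {I : Subgroup (G₁ × G₂)}
    (hI₁ : Surjective (Prod.fst ∘ I.subtype)) {f : G₁ →* G₁'} (hf : Surjective f)
    (g : G₂ →* G₂') : Surjective (Prod.fst ∘ (I.map (f.prodMap g)).subtype) := by
  intro q
  obtain ⟨a, rfl⟩ := hf q
  obtain ⟨⟨x, hx⟩, rfl⟩ := hI₁ a
  exact ⟨⟨_, mem_map_of_mem _ hx⟩, rfl⟩

theorem surjective_snd_map_prodMap {I : Subgroup (G₁ × G₂)}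
    (hI₂ : Surjective (Prod.snd ∘ I.subtype)) (f : G₁ →* G₁') {g : G₂ →* G₂'}
    (hg : Surjective g) : Surjective (Prod.snd ∘ (I.map (f.prodMap g)).subtype) := by
  intro q
  obtain ⟨b, rfl⟩ := hg q
  obtain ⟨⟨x, hx⟩, rfl⟩ := hI₂ b
  exact ⟨⟨_, mem_map_of_mem _ hx⟩, rfl⟩

end Subgroup

section Profinite

variable {G G₁ G₂ : Type*} [Group G] [Group G₁] [Group G₂]
  [TopologicalSpace G] [IsTopologicalGroup G] [CompactSpace G] [TotallyDisconnectedSpace G]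
  [TopologicalSpace G₁] [IsTopologicalGroup G₁] [CompactSpace G₁] [TotallyDisconnectedSpace G₁]
  [TopologicalSpace G₂] [IsTopologicalGroup G₂] [CompactSpace G₂] [TotallyDisconnectedSpace G₂]

theorem Subgroup.exists_isOpen_ne_top_of_isClosed {H : Subgroup G} (hH : IsClosed (H : Set G))
    (hne : H ≠ ⊤) : ∃ N : Subgroup G, IsOpen (N : Set G) ∧ H ≤ N ∧ N ≠ ⊤ := by
  by_contra! h
  refine hne <| (ProfiniteGrp.closedSubgroup_eq_sInf_open ⟨H, hH⟩).trans ?_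
  exact sInf_eq_top.2 fun N hN => h N hN.1 hN.2

theorem exists_openNormalSubgroup_prod_le {N : Subgroup (G₁ × G₂)}
    (hN : IsOpen (N : Set (G₁ × G₂))) :
    ∃ (U₁ : OpenNormalSubgroup G₁) (U₂ : OpenNormalSubgroup G₂),
      (U₁ : Subgroup G₁).prod U₂ ≤ N := by
  obtain ⟨U₁, hU₁⟩ := ProfiniteGrp.exist_openNormalSubgroup_sub_open_nhds_of_one
    (hN.preimage (continuous_id.prodMk continuous_const)) (one_mem N)
  obtain ⟨U₂, hU₂⟩ := ProfiniteGrp.exist_openNormalSubgroup_sub_open_nhds_of_one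
    (hN.preimage (continuous_const.prodMk continuous_id)) (one_mem N)
  refine ⟨U₁, U₂, fun ⟨a, b⟩ ⟨ha, hb⟩ => ?_⟩
  have h₁ : ((a, 1) : G₁ × G₂) ∈ N := hU₁ ha
  have h₂ : ((1, b) : G₁ × G₂) ∈ N := hU₂ hb
  simpa using mul_mem h₁ h₂

end Profinite

theorem goursat_profinite_two_general
    (B₁ B₂ : Type) [Group B₁] [Group B₂]
    [TopologicalSpace B₁] [IsTopologicalGroup B₁] [CompactSpace B₁]
    [TotallyDisconnectedSpace B₁]
    [TopologicalSpace B₂] [IsTopologicalGroup B₂] [CompactSpace B₂]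
    [TotallyDisconnectedSpace B₂]
    (hsimple : ∀ (Q : Type) [Group Q] [Finite Q] [IsSimpleGroup Q] [TopologicalSpace Q] [DiscreteTopology Q],
      ¬ ((∃ f : B₁ →* Q, Continuous f ∧ Function.Surjective f) ∧
          (∃ g : B₂ →* Q, Continuous g ∧ Function.Surjective g)))
    (H : Subgroup (B₁ × B₂)) (hH : IsClosed (H : Set (B₁ × B₂)))
    (h1 : Function.Surjective fun h : H => (h : B₁ × B₂).1)
    (h2 : Function.Surjective fun h : H => (h : B₁ × B₂).2) :
    H = ⊤ := by
  by_contra hne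
  obtain ⟨N, hNopen, hHN, hNtop⟩ := H.exists_isOpen_ne_top_of_isClosed hH hne
  obtain ⟨U₁, U₂, hU⟩ := exists_openNormalSubgroup_prod_le hNopen
  let π₁ := QuotientGroup.mk' (U₁ : Subgroup B₁)
  let π₂ := QuotientGroup.mk' (U₂ : Subgroup B₂)
  have hker : (π₁.prodMap π₂).ker ≤ N := by
    rwa [MonoidHom.ker_prodMap, QuotientGroup.ker_mk', QuotientGroup.ker_mk']
  obtain ⟨Q, _, _, _, ⟨f, hf⟩, g, hg⟩ := Subgroup.exists_common_simple_quotient_of_ne_top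
    (Subgroup.surjective_fst_map_prodMap h1 (QuotientGroup.mk'_surjective _) π₂)
    (Subgroup.surjective_snd_map_prodMap h2 π₁ (QuotientGroup.mk'_surjective _))
    (Subgroup.map_ne_top_of_le_of_ker_le hHN hker hNtop)
  let _ : TopologicalSpace Q := ⊥
  have : DiscreteTopology Q := ⟨rfl⟩
  exact hsimple Q
    ⟨⟨f.comp π₁, (continuous_of_discreteTopology (f := ⇑f)).comp QuotientGroup.continuous_mk,
      hf.comp (QuotientGroup.mk'_surjective _)⟩,
    ⟨g.comp π₂, (continuous_of_discreteTopology (f := ⇑g)).comp QuotientGroup.continuous_mk,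
      hg.comp (QuotientGroup.mk'_surjective _)⟩⟩

/-- Goursat's lemma for two profinite groups: let `B₁` and `B₂` be
profinite groups having no finite simple group as a common continuous quotient.
If `H` is a closed subgroup of `B₁ × B₂` projecting surjectively onto each factor,
then `H = B₁ × B₂`. -/
theorem goursat_profinite_two
    (B₁ B₂ : Type) [Group B₁] [Group B₂]
    [TopologicalSpace B₁] [IsTopologicalGroup B₁] [CompactSpace B₁] [T2Space B₁]
    [TotallyDisconnectedSpace B₁]
    [TopologicalSpace B₂] [IsTopologicalGroup B₂] [CompactSpace B₂] [T2Space B₂]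
    [TotallyDisconnectedSpace B₂]
    (hsimple : ∀ (Q : Type) [Group Q] [Finite Q] [IsSimpleGroup Q] [TopologicalSpace Q] [DiscreteTopology Q],
      ¬ ((∃ f : B₁ →* Q, Continuous f ∧ Function.Surjective f) ∧
          (∃ g : B₂ →* Q, Continuous g ∧ Function.Surjective g)))
    (H : Subgroup (B₁ × B₂)) (hH : IsClosed (H : Set (B₁ × B₂)))
    (h1 : Function.Surjective fun h : H => (h : B₁ × B₂).1)
    (h2 : Function.Surjective fun h : H => (h : B₁ × B₂).2) :
    H = ⊤ :=
  goursat_profinite_two_general B₁ B₂ hsimple H hH h1 h2
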